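/- Let γ > β > 0, let M > 0, and let (h_j)_{j∈ℕ} be a sequence of functions, each lying in H_γ with weak derivative g_j, such that ‖h_j‖_γ ≤ M for all j. Write c_j := h_j(∞) = lim_{x→∞} h_j(x) (which exists). Then there exist a subsequence (h_{j_k}), a real number c, and a function φ ∈ L²([0,∞), e^{βx} dx) such that c_{j_k} → c and ∫₀^∞ |(h_{j_k}(x) − c_{j_k}) − φ(x)|² e^{βx} dx → 0 as k → ∞. In other words, the embedding h ↦ (h − h(∞), h(∞)) of H_γ into L²_β ⊕ ℝ is compact. -/

import Mathlib

/-!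
Peter–Paul's inequality `|g| ≤ (ε g² e^{γt} + e^{-γt} / ε) / 2` bounds `|∫_S g|` in terms of the
`H_γ`-norm and the `e^{-γt}`-mass of `S`. For `S = (x, ∞)` this gives the uniform decay
`|h_j x - c_j| ≤ C e^{-γx/2}`, and for `S = (y, x]` the uniform Hölder bound
`|h_j x - h_j y| ≤ M √(x - y)`. Bolzano–Weierstrass for `(c_j)` and a diagonal argument on a
countable dense set, upgraded to all points by equicontinuity, give a pointwise convergent
subsequence; since `e^{-γx} e^{βx}` is integrable for `β < γ`, dominated convergence turns pointwise
convergence into convergence in `L²_β`.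
-/

open MeasureTheory Real Filter Set Topology

theorem abs_le_peter_paul {v w ε : ℝ} (hw : 0 < w) (hε : 0 < ε) :
    |v| ≤ (ε * (v ^ 2 * w) + w⁻¹ / ε) / 2 := by
  have hgap : (ε * (v ^ 2 * w) + w⁻¹ / ε) / 2 - |v| = (ε * |v| * w - 1) ^ 2 / (2 * ε * w) := by
    field_simp
    rw [← sq_abs v]
    ring
  have : 0 ≤ (ε * |v| * w - 1) ^ 2 / (2 * ε * w) := by positivity
  linarith

theorem abs_le_and_le_sq_of_sqrt_sq_add_le {a b M : ℝ} (hb : 0 ≤ b) (h : √(|a| ^ 2 + b) ≤ M) :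
    |a| ≤ M ∧ b ≤ M ^ 2 := by
  obtain ⟨hM, hle⟩ := Real.sqrt_le_iff.1 h
  exact ⟨(sq_le_sq₀ (abs_nonneg a) hM).1 (by linarith [sq_nonneg |a|]), by linarith [sq_nonneg |a|]⟩

section PeterPaul

variable {α : Type*} [MeasurableSpace α] {μ : Measure α} {g w : α → ℝ}

theorem integrable_of_integrable_sq_mul (hw : ∀ t, 0 < w t) (hg : AEStronglyMeasurable g μ)
    (hgw : Integrable (fun t => g t ^ 2 * w t) μ) (hw_inv : Integrable (fun t => (w t)⁻¹) μ) :
    Integrable g μ :=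
  (((hgw.const_mul 1).add (hw_inv.div_const 1)).div_const 2).mono' hg <|
    Eventually.of_forall fun t => (Real.norm_eq_abs _).trans_le (abs_le_peter_paul (hw t) one_pos)

theorem abs_integral_le_peter_paul (hw : ∀ t, 0 < w t) (hg : AEStronglyMeasurable g μ)
    (hgw : Integrable (fun t => g t ^ 2 * w t) μ) (hw_inv : Integrable (fun t => (w t)⁻¹) μ)
    {ε : ℝ} (hε : 0 < ε) :
    |∫ t, g t ∂μ| ≤ (ε * ∫ t, g t ^ 2 * w t ∂μ + (∫ t, (w t)⁻¹ ∂μ) / ε) / 2 :=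
  calc |∫ t, g t ∂μ| ≤ ∫ t, |g t| ∂μ := by
        simpa only [Real.norm_eq_abs] using norm_integral_le_integral_norm g
    _ ≤ ∫ t, (ε * (g t ^ 2 * w t) + (w t)⁻¹ / ε) / 2 ∂μ :=
        integral_mono (integrable_of_integrable_sq_mul hw hg hgw hw_inv).abs
          (((hgw.const_mul ε).add (hw_inv.div_const ε)).div_const 2)
          fun t => abs_le_peter_paul (hw t) hε
    _ = (ε * ∫ t, g t ^ 2 * w t ∂μ + (∫ t, (w t)⁻¹ ∂μ) / ε) / 2 := by
        rw [integral_div, integral_add (hgw.const_mul ε) (hw_inv.div_const ε),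
          integral_const_mul, integral_div]

end PeterPaul

theorem integrableOn_inv_exp_mul_Ioi {γ : ℝ} (hγ : 0 < γ) (a : ℝ) :
    IntegrableOn (fun t => (exp (γ * t))⁻¹) (Ioi a) := by
  simpa only [← exp_neg, ← neg_mul] using integrableOn_exp_mul_Ioi (neg_neg_of_pos hγ) a

theorem integral_inv_exp_mul_Ioi {γ : ℝ} (hγ : 0 < γ) (a : ℝ) :
    ∫ t in Ioi a, (exp (γ * t))⁻¹ = exp (-(γ * a)) / γ := by
  simp only [← exp_neg, ← neg_mul]
  rw [integral_exp_mul_Ioi (neg_neg_of_pos hγ), div_neg, neg_div, neg_neg]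

/-- `h ∈ H_γ` with weak derivative `g`; only the values of `h` on `[0, ∞)` matter. -/
structure MemHgamma (γ : ℝ) (h g : ℝ → ℝ) : Prop where
  measurable_deriv : Measurable g
  integrableOn_deriv_sq_mul_exp : IntegrableOn (fun t => g t ^ 2 * exp (γ * t)) (Ioi 0)
  eq_add_integral : ∀ x ≥ (0 : ℝ), h x = h 0 + ∫ t in (0 : ℝ)..x, g t

namespace MemHgamma

variable {γ M : ℝ} {h g : ℝ → ℝ}

theorem integrableOn_deriv (hh : MemHgamma γ h g) (hγ : 0 < γ) : IntegrableOn g (Ioi 0) :=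
  integrable_of_integrable_sq_mul (fun _ => exp_pos _) hh.measurable_deriv.aestronglyMeasurable
    hh.integrableOn_deriv_sq_mul_exp (integrableOn_inv_exp_mul_Ioi hγ 0)

theorem intervalIntegrable_deriv (hh : MemHgamma γ h g) (hγ : 0 < γ) {x : ℝ} (hx : 0 ≤ x) :
    IntervalIntegrable g volume 0 x :=
  (intervalIntegrable_iff_integrableOn_Ioc_of_le hx).2
    ((hh.integrableOn_deriv hγ).mono_set Ioc_subset_Ioi_self)

theorem sub_eq_intervalIntegral (hh : MemHgamma γ h g) (hγ : 0 < γ) {x y : ℝ} (hx : 0 ≤ x)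
    (hy : 0 ≤ y) : h y - h x = ∫ t in x..y, g t := by
  rw [hh.eq_add_integral y hy, hh.eq_add_integral x hx, add_sub_add_left_eq_sub,
    intervalIntegral.integral_interval_sub_left (hh.intervalIntegrable_deriv hγ hy)
      (hh.intervalIntegrable_deriv hγ hx)]

theorem eq_add_setIntegral_Ioi_of_tendsto (hh : MemHgamma γ h g) (hγ : 0 < γ) {c x : ℝ}
    (hc : Tendsto h atTop (𝓝 c)) (hx : 0 ≤ x) : c = h x + ∫ t in Ioi x, g t := by
  refine tendsto_nhds_unique hc <|
    ((intervalIntegral_tendsto_integral_Ioi x ((hh.integrableOn_deriv hγ).mono_set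
      (Ioi_subset_Ioi hx)) tendsto_id).const_add (h x)).congr' ?_
  filter_upwards [eventually_ge_atTop 0] with y hy
  rw [id, ← hh.sub_eq_intervalIntegral hγ hx hy, add_sub_cancel]

theorem abs_setIntegral_deriv_le (hh : MemHgamma γ h g)
    (hM : ∫ t in Ioi 0, g t ^ 2 * exp (γ * t) ≤ M ^ 2) (hγ : 0 < γ) {S : Set ℝ}
    (hS : S ⊆ Ioi 0) {ε : ℝ} (hε : 0 < ε) :
    |∫ t in S, g t| ≤ (ε * M ^ 2 + (∫ t in S, (exp (γ * t))⁻¹) / ε) / 2 := by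
  refine (abs_integral_le_peter_paul (fun _ => exp_pos _)
    hh.measurable_deriv.aestronglyMeasurable (hh.integrableOn_deriv_sq_mul_exp.mono_set hS)
    ((integrableOn_inv_exp_mul_Ioi hγ 0).mono_set hS) hε).trans ?_
  gcongr
  exact (setIntegral_mono_set hh.integrableOn_deriv_sq_mul_exp
    (Eventually.of_forall fun t => by positivity) hS.eventuallyLE).trans hM

theorem abs_sub_le_of_tendsto (hh : MemHgamma γ h g)
    (hM : ∫ t in Ioi 0, g t ^ 2 * exp (γ * t) ≤ M ^ 2) (hγ : 0 < γ) {c x : ℝ}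
    (hc : Tendsto h atTop (𝓝 c)) (hx : 0 ≤ x) :
    |h x - c| ≤ (M ^ 2 + 1 / γ) / 2 * exp (-(γ / 2) * x) := by
  set ε := exp (-(γ / 2) * x)
  have hε : 0 < ε := exp_pos _
  have hε_sq : exp (-(γ * x)) = ε ^ 2 := by rw [← exp_nat_mul]; ring_nf
  rw [hh.eq_add_setIntegral_Ioi_of_tendsto hγ hc hx, sub_add_cancel_left, abs_neg]
  calc |∫ t in Ioi x, g t| ≤ (ε * M ^ 2 + (∫ t in Ioi x, (exp (γ * t))⁻¹) / ε) / 2 :=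
        hh.abs_setIntegral_deriv_le hM hγ (Ioi_subset_Ioi hx) hε
    _ = (M ^ 2 + 1 / γ) / 2 * ε := by
        rw [integral_inv_exp_mul_Ioi hγ, hε_sq]
        field_simp

theorem abs_sub_le_mul_sqrt (hh : MemHgamma γ h g)
    (hM : ∫ t in Ioi 0, g t ^ 2 * exp (γ * t) ≤ M ^ 2) (hγ : 0 < γ) (hM0 : 0 < M) {x y : ℝ}
    (hy : 0 ≤ y) (hyx : y ≤ x) : |h x - h y| ≤ M * √(x - y) := by
  rcases hyx.eq_or_lt with rfl | hyx
  · simp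
  set s := √(x - y)
  have hs : 0 < s := Real.sqrt_pos.2 (sub_pos.2 hyx)
  have hs_sq : s ^ 2 = x - y := Real.sq_sqrt (sub_nonneg.2 hyx.le)
  have hS : Ioc y x ⊆ Ioi 0 := fun t ht => hy.trans_lt ht.1
  have hweight : ∫ t in Ioc y x, (exp (γ * t))⁻¹ ≤ x - y := by
    have := norm_setIntegral_le_of_norm_le_const (f := fun t => (exp (γ * t))⁻¹) (C := 1)
      (measure_Ioc_lt_top (μ := volume) (a := y) (b := x)) fun t ht => by
      rw [norm_inv, Real.norm_of_nonneg (exp_pos _).le]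
      exact inv_le_one_of_one_le₀ (one_le_exp (mul_nonneg hγ.le (le_of_lt (hS ht))))
    rw [Real.volume_real_Ioc_of_le hyx.le, one_mul] at this
    exact (le_abs_self _).trans this
  rw [hh.sub_eq_intervalIntegral hγ hy (hy.trans hyx.le), intervalIntegral.integral_of_le hyx.le]
  -- `ε = √(x - y) / M` balances the two Peter–Paul terms.
  calc |∫ t in Ioc y x, g t| ≤ (s / M * M ^ 2 + (∫ t in Ioc y x, (exp (γ * t))⁻¹) / (s / M)) / 2 :=
        hh.abs_setIntegral_deriv_le hM hγ hS (by positivity)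
    _ ≤ (s / M * M ^ 2 + (x - y) / (s / M)) / 2 := by gcongr
    _ = M * s := by rw [← hs_sq]; field_simp; ring

theorem dist_comp_max_le (hh : MemHgamma γ h g)
    (hM : ∫ t in Ioi 0, g t ^ 2 * exp (γ * t) ≤ M ^ 2) (hγ : 0 < γ) (hM0 : 0 < M) (x y : ℝ) :
    dist (h (max x 0)) (h (max y 0)) ≤ M * √(dist x y) := by
  have hmax : |max x 0 - max y 0| ≤ dist x y := abs_max_sub_max_le_abs x y 0
  rw [Real.dist_eq]
  rcases le_total (max y 0) (max x 0) with hle | hle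
  · refine (hh.abs_sub_le_mul_sqrt hM hγ hM0 (le_max_right y 0) hle).trans ?_
    gcongr
    exact (le_abs_self _).trans hmax
  · rw [abs_sub_comm] at hmax ⊢
    refine (hh.abs_sub_le_mul_sqrt hM hγ hM0 (le_max_right x 0) hle).trans ?_
    gcongr
    exact (le_abs_self _).trans hmax

end MemHgamma

theorem Equicontinuous.cauchySeq_of_dense {X α ι : Type*} [TopologicalSpace X]
    [PseudoMetricSpace α] [Nonempty ι] [SemilatticeSup ι] {F : ι → X → α}
    (hF : Equicontinuous F) {D : Set X} (hD : Dense D)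
    (hFD : ∀ y ∈ D, CauchySeq fun n => F n y) (x : X) : CauchySeq fun n => F n x := by
  rw [Metric.cauchySeq_iff]
  intro ε hε
  obtain ⟨y, hyD, hyx⟩ := hD.inter_nhds_nonempty
    (Metric.equicontinuousAt_iff_right.1 (hF x) (ε / 3) (by positivity))
  obtain ⟨N, hN⟩ := Metric.cauchySeq_iff.1 (hFD y hyD) (ε / 3) (by positivity)
  refine ⟨N, fun m hm n hn => ?_⟩
  have hm' := hyx m
  have hn' := hyx n
  rw [dist_comm] at hn'
  calc dist (F m x) (F n x) ≤ dist (F m x) (F m y) + dist (F m y) (F n y) + dist (F n y) (F n x) :=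
        dist_triangle4 _ _ _ _
    _ < ε := by linarith [hN m hm n hn]

theorem exists_strictMono_tendsto_of_equicontinuous {X α : Type*} [TopologicalSpace X]
    [TopologicalSpace.SeparableSpace X] [PseudoMetricSpace α] {F : ℕ → X → α}
    (hF : Equicontinuous F) {K : X → Set α} (hK : ∀ x, IsCompact (K x))
    (hFK : ∀ n x, F n x ∈ K x) :
    ∃ φ : ℕ → ℕ, StrictMono φ ∧ ∀ x, ∃ l, Tendsto (fun n => F (φ n) x) atTop (𝓝 l) := by
  obtain ⟨D, hD_countable, hD⟩ := TopologicalSpace.exists_countable_dense X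
  have : Countable D := hD_countable.to_subtype
  obtain ⟨L, -, φ, hφ, hL⟩ := (isCompact_univ_pi fun y : D => hK y).isSeqCompact
    (x := fun n (y : D) => F n y) fun n y _ => hFK n y
  refine ⟨φ, hφ, fun x => ?_⟩
  have hcauchy := (hF.comp φ).cauchySeq_of_dense hD
    (fun y hy => (tendsto_pi_nhds.1 hL ⟨y, hy⟩).cauchySeq) x
  obtain ⟨l, -, hl⟩ := cauchySeq_tendsto_of_isComplete (hK x).isComplete (fun n => hFK _ x) hcauchy
  exact ⟨l, hl⟩

section Family

variable {γ M : ℝ} {h g : ℕ → ℝ → ℝ}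

theorem equicontinuous_comp_max_of_memHgamma (hH : ∀ j, MemHgamma γ (h j) (g j))
    (hM : ∀ j, ∫ t in Ioi 0, g j t ^ 2 * exp (γ * t) ≤ M ^ 2) (hγ : 0 < γ) (hM0 : 0 < M) :
    Equicontinuous fun j x => h j (max x 0) := by
  refine Metric.equicontinuous_of_continuity_modulus (fun r => M * √r) ?_ _
    fun x y j => (hH j).dist_comp_max_le (hM j) hγ hM0 x y
  exact (continuous_const.mul continuous_sqrt : Continuous fun r => M * √r).tendsto' 0 0 (by simp)

theorem exists_strictMono_tendsto_of_memHgamma (hH : ∀ j, MemHgamma γ (h j) (g j))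
    (hM : ∀ j, ∫ t in Ioi 0, g j t ^ 2 * exp (γ * t) ≤ M ^ 2) (h0 : ∀ j, |h j 0| ≤ M)
    (hγ : 0 < γ) (hM0 : 0 < M) {c : ℕ → ℝ} (hc : ∀ j, Tendsto (h j) atTop (𝓝 (c j))) :
    ∃ k : ℕ → ℕ, StrictMono k ∧ ∃ cLim, Tendsto (fun n => c (k n)) atTop (𝓝 cLim) ∧
      ∀ x ≥ (0 : ℝ), ∃ l, Tendsto (fun n => h (k n) x) atTop (𝓝 l) := by
  set C := (M ^ 2 + 1 / γ) / 2
  have hdecay : ∀ j, ∀ x ≥ (0 : ℝ), |h j x - c j| ≤ C := fun j x hx =>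
    ((hH j).abs_sub_le_of_tendsto (hM j) hγ (hc j) hx).trans <|
      mul_le_of_le_one_right (by positivity) (exp_le_one_iff.2 (by nlinarith))
  have hc_bdd : ∀ j, |c j| ≤ M + C := fun j => by
    have := abs_sub (h j 0) (h j 0 - c j)
    rw [sub_sub_cancel] at this
    linarith [h0 j, hdecay j 0 le_rfl]
  have hh_bdd : ∀ j, ∀ x ≥ (0 : ℝ), |h j x| ≤ M + C + C := fun j x hx => by
    have := abs_add_le (h j x - c j) (c j)
    rw [sub_add_cancel] at this
    linarith [hc_bdd j, hdecay j x hx]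
  obtain ⟨cLim, -, k₁, hk₁, hck₁⟩ := tendsto_subseq_of_bounded Metric.isBounded_closedBall
    fun j => mem_closedBall_zero_iff.2 ((norm_eq_abs _).trans_le (hc_bdd j))
  obtain ⟨k₂, hk₂, hconv⟩ := exists_strictMono_tendsto_of_equicontinuous
    ((equicontinuous_comp_max_of_memHgamma hH hM hγ hM0).comp k₁)
    (fun _ => isCompact_closedBall (0 : ℝ) (M + C + C))
    fun n x => mem_closedBall_zero_iff.2 ((norm_eq_abs _).trans_le (hh_bdd _ _ (le_max_right x 0)))
  refine ⟨k₁ ∘ k₂, hk₁.comp hk₂, cLim, hck₁.comp hk₂.tendsto_atTop, fun x hx => ?_⟩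
  simpa [max_eq_left hx] using hconv x

end Family

section WeightedL2

variable {β γ K : ℝ}

theorem sq_mul_exp_le_of_abs_le {v x : ℝ} (hv : |v| ≤ K * exp (-(γ / 2) * x)) :
    v ^ 2 * exp (β * x) ≤ K ^ 2 * exp ((β - γ) * x) :=
  calc v ^ 2 * exp (β * x) ≤ (K * exp (-(γ / 2) * x)) ^ 2 * exp (β * x) := by
        rw [← sq_abs]
        gcongr
    _ = K ^ 2 * exp ((β - γ) * x) := by
        rw [mul_pow, ← exp_nat_mul, mul_assoc, ← exp_add]
        ring_nf

theorem integrableOn_sq_mul_exp_of_abs_le (hβγ : β < γ) {v : ℝ → ℝ}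
    (hv : AEStronglyMeasurable v (volume.restrict (Ioi 0)))
    (hv_le : ∀ x > 0, |v x| ≤ K * exp (-(γ / 2) * x)) :
    IntegrableOn (fun x => v x ^ 2 * exp (β * x)) (Ioi 0) :=
  ((integrableOn_exp_mul_Ioi (sub_neg.2 hβγ) 0).const_mul (K ^ 2)).mono'
    ((hv.pow 2).mul (continuous_exp.comp (continuous_const.mul continuous_id)).aestronglyMeasurable)
    ((ae_restrict_mem measurableSet_Ioi).mono fun x hx => by
      rw [norm_of_nonneg (by positivity)]
      exact sq_mul_exp_le_of_abs_le (hv_le x hx))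

variable {u : ℕ → ℝ → ℝ} {φ : ℝ → ℝ}

theorem aestronglyMeasurable_and_abs_le_of_tendsto
    (hu : ∀ n, AEStronglyMeasurable (u n) (volume.restrict (Ioi 0)))
    (hu_le : ∀ n, ∀ x > 0, |u n x| ≤ K * exp (-(γ / 2) * x))
    (hu_lim : ∀ x > 0, Tendsto (fun n => u n x) atTop (𝓝 (φ x))) :
    AEStronglyMeasurable φ (volume.restrict (Ioi 0)) ∧ ∀ x > 0, |φ x| ≤ K * exp (-(γ / 2) * x) :=
  ⟨aestronglyMeasurable_of_tendsto_ae atTop hu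
      ((ae_restrict_mem measurableSet_Ioi).mono hu_lim),
    fun x hx => le_of_tendsto (hu_lim x hx).abs (Eventually.of_forall fun n => hu_le n x hx)⟩

theorem tendsto_integral_sub_sq_mul_exp (hβγ : β < γ)
    (hu : ∀ n, AEStronglyMeasurable (u n) (volume.restrict (Ioi 0)))
    (hu_le : ∀ n, ∀ x > 0, |u n x| ≤ K * exp (-(γ / 2) * x))
    (hu_lim : ∀ x > 0, Tendsto (fun n => u n x) atTop (𝓝 (φ x))) :
    Tendsto (fun n => ∫ x in Ioi 0, (u n x - φ x) ^ 2 * exp (β * x)) atTop (𝓝 0) := by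
  obtain ⟨hφ, hφ_le⟩ := aestronglyMeasurable_and_abs_le_of_tendsto hu hu_le hu_lim
  have hexp : Continuous fun x => exp (β * x) :=
    continuous_exp.comp (continuous_const.mul continuous_id)
  have hsub_le : ∀ n, ∀ x > 0, |u n x - φ x| ≤ 2 * K * exp (-(γ / 2) * x) := fun n x hx => by
    linarith [abs_sub (u n x) (φ x), hu_le n x hx, hφ_le x hx]
  convert tendsto_integral_of_dominated_convergence
    (F := fun n x => (u n x - φ x) ^ 2 * exp (β * x)) (fun x => (2 * K) ^ 2 * exp ((β - γ) * x))
    (fun n => (((hu n).sub hφ).pow 2).mul hexp.aestronglyMeasurable)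
    ((integrableOn_exp_mul_Ioi (sub_neg.2 hβγ) 0).const_mul _)
    (fun n => (ae_restrict_mem measurableSet_Ioi).mono fun x hx => by
      rw [norm_of_nonneg (by positivity)]
      exact sq_mul_exp_le_of_abs_le (hsub_le n x hx))
    ((ae_restrict_mem measurableSet_Ioi).mono fun x hx => by
      simpa using (((hu_lim x hx).sub_const (φ x)).pow 2).mul_const (exp (β * x))) using 2
  exact (integral_zero ℝ ℝ).symm

end WeightedL2

/-- Compactness of the embedding `H_γ ⊂ L²_β ⊕ ℝ`, `h ↦ (h - h(∞), h(∞))`, for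
`γ > β > 0`: every sequence `(h_j)` in `H_γ` bounded in the `H_γ`-norm, with
`c_j = h_j(∞)`, admits a subsequence along which `c_{j_k} → c` and
`h_{j_k} - c_{j_k} → φ` in `L²([0,∞), e^{βx}dx)`. -/
theorem compact_embedding_Hgamma_L2beta_oplus_R
    (β γ M : ℝ) (hβ : 0 < β) (hβγ : β < γ) (hM : 0 < M)
    (h g : ℕ → ℝ → ℝ) (c : ℕ → ℝ)
    (hg_meas : ∀ j, Measurable (g j))
    (hg_int : ∀ j, IntegrableOn (fun t => g j t ^ 2 * Real.exp (γ * t)) (Set.Ioi 0))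
    (hFTC : ∀ j, ∀ x ≥ (0 : ℝ), h j x = h j 0 + ∫ t in (0:ℝ)..x, g j t)
    (hlim : ∀ j, Tendsto (h j) atTop (nhds (c j)))
    (hbound : ∀ j,
      Real.sqrt (|h j 0| ^ 2 + ∫ t in Set.Ioi (0:ℝ), g j t ^ 2 * Real.exp (γ * t)) ≤ M) :
    ∃ k : ℕ → ℕ, StrictMono k ∧
      ∃ cLim : ℝ, ∃ φ : ℝ → ℝ,
        IntegrableOn (fun x => φ x ^ 2 * Real.exp (β * x)) (Set.Ioi 0) ∧
        Tendsto (fun n => c (k n)) atTop (nhds cLim) ∧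
        Tendsto
          (fun n => ∫ x in Set.Ioi (0:ℝ), ((h (k n) x - c (k n)) - φ x) ^ 2 * Real.exp (β * x))
          atTop (nhds 0) := by
  have hγ : 0 < γ := hβ.trans hβγ
  have hH : ∀ j, MemHgamma γ (h j) (g j) := fun j => ⟨hg_meas j, hg_int j, hFTC j⟩
  obtain ⟨h0, hE⟩ := forall_and.1 fun j => abs_le_and_le_sq_of_sqrt_sq_add_le
    (setIntegral_nonneg measurableSet_Ioi fun t _ => by positivity) (hbound j)
  obtain ⟨k, hk, cLim, hck, hpt⟩ := exists_strictMono_tendsto_of_memHgamma hH hE h0 hγ hM hlim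
  choose! ψ hψ using hpt
  set u : ℕ → ℝ → ℝ := fun n x => h (k n) x - c (k n)
  have hu : ∀ n, AEStronglyMeasurable (u n) (volume.restrict (Ioi 0)) := fun n =>
    ((((equicontinuous_comp_max_of_memHgamma hH hE hγ hM).continuous (k n)).sub
      (continuous_const (y := c (k n)))).aestronglyMeasurable).congr <|
      (ae_restrict_mem measurableSet_Ioi).mono fun x hx => by
        simp only [u, Pi.sub_apply, max_eq_left (mem_Ioi.1 hx).le]
  have hu_le : ∀ n, ∀ x > 0, |u n x| ≤ (M ^ 2 + 1 / γ) / 2 * exp (-(γ / 2) * x) :=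
    fun n x hx => (hH (k n)).abs_sub_le_of_tendsto (hE _) hγ (hlim _) hx.le
  have hu_lim : ∀ x > 0, Tendsto (fun n => u n x) atTop (𝓝 (ψ x - cLim)) :=
    fun x hx => (hψ x hx.le).sub hck
  obtain ⟨hφ, hφ_le⟩ := aestronglyMeasurable_and_abs_le_of_tendsto hu hu_le hu_lim
  exact ⟨k, hk, cLim, fun x => ψ x - cLim, integrableOn_sq_mul_exp_of_abs_le hβγ hφ hφ_le, hck,
    tendsto_integral_sub_sq_mul_exp hβγ hu hu_le hu_lim⟩
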